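/- First-order Trotter error bound: for Hermitian matrices A, B and t ≥ 0, ‖exp(−i(A+B)t) − exp(−iAt)·exp(−iBt)‖ ≤ (t²/2)·‖[A,B]‖ in the operator norm. -/

import Mathlib

/-!
Interpolate between the two evolutions: `f s = e^{-i(t-s)(a+b)} e^{-isa} e^{-isb}` runs from
`f 0 = e^{-it(a+b)}` to `f t = e^{-ita} e^{-itb}`, and
`f' s = e^{-i(t-s)(a+b)} · i[b, e^{-isa}] · e^{-isb}` has norm `‖[b, e^{-isa}]‖` because the outer
factors are unitary. The same interpolation applied to `u ↦ e^{-i(s-u)a} b e^{-iua}` gives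
`‖[b, e^{-isa}]‖ ≤ s‖[a,b]‖`, and integrating this linear bound over `[0, t]` yields
`t²/2 · ‖[a,b]‖`.
-/

open NormedSpace Complex Set

theorem norm_image_sub_le_of_norm_deriv_le_mul_sub {E : Type*} [NormedAddCommGroup E]
    [NormedSpace ℝ E] {f f' : ℝ → E} {a b C : ℝ} (hf : ∀ x ∈ Icc a b, HasDerivAt f (f' x) x)
    (bound : ∀ x ∈ Ico a b, ‖f' x‖ ≤ C * (x - a)) :
    ∀ x ∈ Icc a b, ‖f x - f a‖ ≤ C * (x - a) ^ 2 / 2 := by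
  have hB : ∀ x, HasDerivAt (fun x => C * (x - a) ^ 2 / 2) (C * (x - a)) x := fun x => by
    refine ((((hasDerivAt_id' x).sub_const a).fun_pow 2).const_mul C |>.div_const 2).congr_deriv ?_
    norm_num
    ring
  refine image_norm_le_of_norm_deriv_right_le_deriv_boundary
    (fun x hx => ((hf x hx).sub_const (f a)).continuousAt.continuousWithinAt)
    (fun x hx => ((hf x (Ico_subset_Icc_self hx)).sub_const (f a)).hasDerivWithinAt)
    (by simp) hB bound

section TimeEvolution

variable {𝔸 : Type*} [CStarAlgebra 𝔸]

noncomputable def timeEvolution (a : 𝔸) (s : ℝ) : 𝔸 :=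
  exp ((-(I * s)) • a)

theorem timeEvolution_zero (a : 𝔸) : timeEvolution a 0 = 1 := by
  simp [timeEvolution]

theorem commute_timeEvolution (a : 𝔸) (s : ℝ) : Commute a (timeEvolution a s) :=
  ((Commute.refl a).smul_right _).exp_right

theorem hasDerivAt_timeEvolution (a : 𝔸) (s : ℝ) :
    HasDerivAt (timeEvolution a) ((-I) • (a * timeEvolution a s)) s := by
  have h := hasDerivAt_exp_smul_const' (𝕂 := ℝ) ((-I) • a) s
  have hsmul : ∀ u : ℝ, u • (-I) • a = (-(I * u)) • a := fun u => by
    rw [← smul_assoc, Complex.real_smul, mul_neg, mul_comm]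
  simp only [hsmul, smul_mul_assoc] at h
  exact h

theorem hasDerivAt_timeEvolution_sub (a : 𝔸) (t s : ℝ) :
    HasDerivAt (fun u => timeEvolution a (t - u)) (I • (a * timeEvolution a (t - s))) s := by
  simpa [Function.comp_def] using
    (hasDerivAt_timeEvolution a (t - s)).scomp s ((hasDerivAt_id s).const_sub t)

theorem timeEvolution_mem_unitary {a : 𝔸} (ha : IsSelfAdjoint a) (s : ℝ) :
    timeEvolution a s ∈ unitary 𝔸 := by
  let +nondep : NormedAlgebra ℚ 𝔸 := .restrictScalars ℚ ℂ 𝔸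
  refine exp_mem_unitary_of_mem_skewAdjoint (ha.smul_mem_skewAdjoint ?_)
  simp [skewAdjoint.mem_iff]

theorem norm_timeEvolution_mul {a : 𝔸} (ha : IsSelfAdjoint a) (s : ℝ) (x : 𝔸) :
    ‖timeEvolution a s * x‖ = ‖x‖ :=
  CStarRing.norm_mem_unitary_mul x (timeEvolution_mem_unitary ha s)

theorem norm_mul_timeEvolution {a : 𝔸} (ha : IsSelfAdjoint a) (s : ℝ) (x : 𝔸) :
    ‖x * timeEvolution a s‖ = ‖x‖ :=
  CStarRing.norm_mul_mem_unitary x (timeEvolution_mem_unitary ha s)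

theorem norm_commutator_timeEvolution_le {a : 𝔸} (ha : IsSelfAdjoint a) (b : 𝔸) {s : ℝ}
    (hs : 0 ≤ s) : ‖b * timeEvolution a s - timeEvolution a s * b‖ ≤ s * ‖a * b - b * a‖ := by
  have hderiv : ∀ u : ℝ, HasDerivAt (fun u => timeEvolution a (s - u) * b * timeEvolution a u)
      (timeEvolution a (s - u) * (I • (a * b - b * a)) * timeEvolution a u) u := fun u => by
    refine ((hasDerivAt_timeEvolution_sub a s u).mul_const b |>.mul
      (hasDerivAt_timeEvolution a u)).congr_deriv ?_
    rw [(commute_timeEvolution a (s - u)).eq]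
    simp only [smul_mul_assoc, mul_smul_comm, mul_sub, sub_mul, smul_sub, mul_assoc, neg_smul,
      mul_neg]
    abel
  have key := norm_image_sub_le_of_norm_deriv_le_segment' (C := ‖a * b - b * a‖)
    (fun u _ => (hderiv u).hasDerivWithinAt) (fun u _ => by
      rw [norm_mul_timeEvolution ha, norm_timeEvolution_mul ha, norm_smul, norm_I, one_mul])
    s ⟨hs, le_rfl⟩
  simpa [timeEvolution_zero, mul_comm ‖_‖] using key

theorem hasDerivAt_trotter_interpolation (a b : 𝔸) (t s : ℝ) :
    HasDerivAt (fun u => timeEvolution (a + b) (t - u) * (timeEvolution a u * timeEvolution b u))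
      (timeEvolution (a + b) (t - s) * (I • (b * timeEvolution a s - timeEvolution a s * b)) *
        timeEvolution b s) s := by
  refine ((hasDerivAt_timeEvolution_sub (a + b) t s).mul
    ((hasDerivAt_timeEvolution a s).mul (hasDerivAt_timeEvolution b s))).congr_deriv ?_
  rw [Pi.mul_apply, (commute_timeEvolution (a + b) (t - s)).eq]
  simp only [smul_mul_assoc, mul_smul_comm, mul_add, add_mul, mul_sub, sub_mul, smul_add, smul_sub,
    mul_assoc, neg_smul, mul_neg, neg_mul]
  abel

theorem norm_timeEvolution_add_sub_mul_le {a b : 𝔸} (ha : IsSelfAdjoint a) (hb : IsSelfAdjoint b)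
    {t : ℝ} (ht : 0 ≤ t) :
    ‖timeEvolution (a + b) t - timeEvolution a t * timeEvolution b t‖ ≤
      t ^ 2 / 2 * ‖a * b - b * a‖ := by
  have key := norm_image_sub_le_of_norm_deriv_le_mul_sub
    (fun s _ => hasDerivAt_trotter_interpolation a b t s) (fun s hs => by
      rw [norm_mul_timeEvolution hb, norm_timeEvolution_mul (ha.add hb), norm_smul, norm_I, one_mul,
        sub_zero, mul_comm]
      exact norm_commutator_timeEvolution_le ha b hs.1) t ⟨ht, le_rfl⟩
  rw [norm_sub_rev]
  simpa [timeEvolution_zero, mul_div_assoc, mul_comm] using key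

end TimeEvolution

open scoped Matrix.Norms.L2Operator

/-- First-order Trotter error bound: for Hermitian `A, B` and `t ≥ 0`,
`‖exp(−i(A+B)t) − exp(−iAt)·exp(−iBt)‖ ≤ (t²/2)·‖[A,B]‖` in the operator (spectral) norm. -/
theorem trotter_first_order_error_bound
    {n : ℕ} (A B : Matrix (Fin n) (Fin n) ℂ)
    (hA : A.IsHermitian) (hB : B.IsHermitian) (t : ℝ) (ht : 0 ≤ t) :
    ‖NormedSpace.exp ((-(Complex.I * (t : ℂ))) • (A + B)) -
        NormedSpace.exp ((-(Complex.I * (t : ℂ))) • A) *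
          NormedSpace.exp ((-(Complex.I * (t : ℂ))) • B)‖
      ≤ (t ^ 2 / 2) * ‖A * B - B * A‖ :=
  norm_timeEvolution_add_sub_mul_le hA.isSelfAdjoint hB.isSelfAdjoint ht
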